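/- arXiv:2301.12736 — 2 statements merged into one kernel-verified Lean document; each statement's English description precedes it below -/
import Mathlib

section
/- Let Y = {0,1} and L₂ : P₂(Y) × Y → ℝ a loss. Suppose there exist Q, Q̃ ∈ P₂(Y) such that Q̃ lies on a segment from some Q' to Q, min(L₂(Q̃,1) − L₂(Q,1), L₂(Q,0) − L₂(Q̃,0)) > 0, and 0 < E_{p∼Q}[p(1)] < (1 + (L₂(Q̃,1) − L₂(Q,1))/(L₂(Q,0) − L₂(Q̃,0)))⁻¹. Then S₂(Q̃, Q) < S₂(Q, Q), so the induced scoring rule S₂ is not proper. -/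
open MeasureTheory

noncomputable instance {α : Type*} [MeasurableSpace α] : MeasurableSpace (ProbabilityMeasure α) :=
  Subtype.instMeasurableSpace

noncomputable def S2 {Y : Type*} [MeasurableSpace Y]
    (L2 : ProbabilityMeasure (ProbabilityMeasure Y) → Y → ℝ)
    (Qhat Q : ProbabilityMeasure (ProbabilityMeasure Y)) : ℝ :=
  ∫ p : ProbabilityMeasure Y, (∫ y, L2 Qhat y ∂(p : Measure Y))
    ∂(Q : Measure (ProbabilityMeasure Y))

noncomputable def mix {α : Type*} [MeasurableSpace α] (l : ℝ) (Q Q' : ProbabilityMeasure α) :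
    ProbabilityMeasure α :=
  ⟨(ENNReal.ofReal l ⊓ 1) • (Q : Measure α) + (1 - (ENNReal.ofReal l ⊓ 1)) • (Q' : Measure α), by
    constructor
    have h1 : (ENNReal.ofReal l ⊓ 1) ≤ 1 := inf_le_right
    simp [Measure.add_apply, Measure.smul_apply, smul_eq_mul, add_tsub_cancel_of_le h1]⟩

def Proper {Y : Type*} [MeasurableSpace Y]
    (L2 : ProbabilityMeasure (ProbabilityMeasure Y) → Y → ℝ) : Prop :=
  ∀ Qhat Q : ProbabilityMeasure (ProbabilityMeasure Y), S2 L2 Q Q ≤ S2 L2 Qhat Q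

/-- $E_{p\sim Q}[p(1)]$ for second-order distributions over $\mathcal Y = \{0,1\}$. -/
noncomputable def expProb1 (Q : ProbabilityMeasure (ProbabilityMeasure (Fin 2))) : ℝ :=
  ∫ p : ProbabilityMeasure (Fin 2), ((p : Measure (Fin 2)) {1}).toReal
    ∂(Q : Measure (ProbabilityMeasure (Fin 2)))

/-! Over `Y = {0,1}` the inner integral of `S₂(Q̂, Q)` is affine in `p(1)`, so integrating over `Q`
gives `S₂(Q̂, Q) = L₂(Q̂,0)·(1 - m) + L₂(Q̂,1)·m` with `m = E_{p∼Q}[p(1)]`. Hence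
`S₂(Q̃, Q) - S₂(Q, Q) = m·(a + b) - b` with `a = L₂(Q̃,1) - L₂(Q,1)` and `b = L₂(Q,0) - L₂(Q̃,0)`,
which is negative exactly when `m < b / (a + b) = (1 + a / b)⁻¹`. -/

theorem measurable_probabilityMeasure_measureReal {α : Type*} [MeasurableSpace α] {s : Set α}
    (hs : MeasurableSet s) :
    Measurable fun p : ProbabilityMeasure α => (p : Measure α).real s :=
  ((Measure.measurable_coe hs).comp measurable_subtype_coe).ennreal_toReal

theorem integrable_probabilityMeasure_measureReal {α : Type*} [MeasurableSpace α] {s : Set α}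
    (hs : MeasurableSet s) (Q : Measure (ProbabilityMeasure α)) [IsFiniteMeasure Q] :
    Integrable (fun p : ProbabilityMeasure α => (p : Measure α).real s) Q := by
  refine .of_bound (measurable_probabilityMeasure_measureReal hs).aestronglyMeasurable 1
    (.of_forall fun p => ?_)
  rw [Real.norm_of_nonneg measureReal_nonneg]
  exact measureReal_le_one

theorem integral_fin_two_eq {μ : Measure (Fin 2)} [IsProbabilityMeasure μ] (f : Fin 2 → ℝ) :
    ∫ y, f y ∂μ = f 0 * (1 - μ.real {1}) + f 1 * μ.real {1} := by
  have hcompl : ({1}ᶜ : Set (Fin 2)) = {0} := by ext y; fin_cases y <;> simp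
  rw [integral_fintype .of_finite, Fin.sum_univ_two, ← hcompl,
    probReal_compl_eq_one_sub (measurableSet_singleton 1), smul_eq_mul, smul_eq_mul,
    mul_comm, mul_comm (μ.real {1})]

theorem S2_fin_two_eq (L2 : ProbabilityMeasure (ProbabilityMeasure (Fin 2)) → Fin 2 → ℝ)
    (Qhat Q : ProbabilityMeasure (ProbabilityMeasure (Fin 2))) :
    S2 L2 Qhat Q = L2 Qhat 0 * (1 - expProb1 Q) + L2 Qhat 1 * expProb1 Q := by
  have hint := integrable_probabilityMeasure_measureReal (measurableSet_singleton (1 : Fin 2))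
    (Q : Measure (ProbabilityMeasure (Fin 2)))
  have hint_compl : Integrable (fun p : ProbabilityMeasure (Fin 2) => 1 - (p : Measure (Fin 2)).real {1})
      Q := (integrable_const 1).sub hint
  simp only [S2, integral_fin_two_eq]
  rw [integral_add (hint_compl.const_mul _) (hint.const_mul _),
    integral_const_mul, integral_const_mul, integral_sub (integrable_const 1) hint]
  simp [expProb1, measureReal_def]

theorem not_proper_of_S2_lt {Y : Type*} [MeasurableSpace Y]
    {L2 : ProbabilityMeasure (ProbabilityMeasure Y) → Y → ℝ}
    {Qhat Q : ProbabilityMeasure (ProbabilityMeasure Y)} (h : S2 L2 Qhat Q < S2 L2 Q Q) :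
    ¬ Proper L2 :=
  fun hProper => (hProper Qhat Q).not_gt h

theorem mul_add_lt_iff_lt_inv_one_add_div {a b m : ℝ} (ha : 0 < a) (hb : 0 < b) :
    m * (a + b) < b ↔ m < (1 + a / b)⁻¹ := by
  rw [one_add_div hb.ne', inv_div, add_comm b, lt_div_iff₀ (by positivity)]

theorem not_proper_of_small_expected_prob_general
    (L2 : ProbabilityMeasure (ProbabilityMeasure (Fin 2)) → Fin 2 → ℝ)
    (Q Qt : ProbabilityMeasure (ProbabilityMeasure (Fin 2)))
    (hMin : 0 < min (L2 Qt 1 - L2 Q 1) (L2 Q 0 - L2 Qt 0))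
    (hSmall : expProb1 Q < (1 + (L2 Qt 1 - L2 Q 1) / (L2 Q 0 - L2 Qt 0))⁻¹) :
    S2 L2 Qt Q < S2 L2 Q Q ∧ ¬ Proper L2 := by
  obtain ⟨ha, hb⟩ := lt_min_iff.mp hMin
  have hm := (mul_add_lt_iff_lt_inv_one_add_div ha hb).mpr hSmall
  have hlt : S2 L2 Qt Q < S2 L2 Q Q := by
    rw [S2_fin_two_eq, S2_fin_two_eq]
    linarith
  exact ⟨hlt, not_proper_of_S2_lt hlt⟩

/-- if $\tilde Q$ lies on a segment toward $Q$, the losses separate with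
the right signs, and $0 < E_{p\sim Q}[p(1)]$ is small enough, then
$S_2(\tilde Q, Q) < S_2(Q,Q)$ and the induced scoring rule is not proper. -/
theorem not_proper_of_small_expected_prob
    (L2 : ProbabilityMeasure (ProbabilityMeasure (Fin 2)) → Fin 2 → ℝ)
    (Q Qt : ProbabilityMeasure (ProbabilityMeasure (Fin 2)))
    (hSeg : ∃ l : ℝ, 0 ≤ l ∧ l ≤ 1 ∧
      ∃ Q' : ProbabilityMeasure (ProbabilityMeasure (Fin 2)), Qt = mix l Q Q')
    (hMin : 0 < min (L2 Qt 1 - L2 Q 1) (L2 Q 0 - L2 Qt 0))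
    (hPos : 0 < expProb1 Q)
    (hSmall : expProb1 Q < (1 + (L2 Qt 1 - L2 Q 1) / (L2 Q 0 - L2 Qt 0))⁻¹) :
    S2 L2 Qt Q < S2 L2 Q Q ∧ ¬ Proper L2 :=
  not_proper_of_small_expected_prob_general L2 Q Qt hMin hSmall
end

section
/- Let Y = ℝ and let L₂ : P₂(ℝ) × ℝ → ℝ be a loss. Suppose p_l, p_r ∈ P₁(ℝ) and Q, Q̃ ∈ P₂(ℝ) with Q̃ = δ_{p_l} and Q = (1−λ*)δ_{p_l} + λ*·δ_{p_r}, where E_{Y∼p_l}[L₂(Q,Y) − L₂(Q̃,Y)] > 0, E_{Y∼p_r}[L₂(Q̃,Y) − L₂(Q,Y)] > 0, and 0 < λ* < (1 + E_{Y∼p_r}[L₂(Q̃,Y) − L₂(Q,Y)] / E_{Y∼p_l}[L₂(Q,Y) − L₂(Q̃,Y)])⁻¹. Then S₂(Q̃, Q) < S₂(Q, Q), so the induced scoring rule is not proper. -/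
/-!
Integrating against the two-point mixture `Q` turns both scores into convex combinations:
`S₂(Q, Q) - S₂(Q̃, Q) = (1 - λ) a - λ b` with `a = E_{p_l}[L₂(Q,Y) - L₂(Q̃,Y)] > 0` and
`b = E_{p_r}[L₂(Q̃,Y) - L₂(Q,Y)] > 0`, and the bound `λ < (1 + b / a)⁻¹` says exactly that
`λ b < (1 - λ) a`.
-/

open MeasureTheory

/-- The second-order Dirac measure $\delta_p$ at a first-order distribution $p$. -/
noncomputable def dirac2 (p : ProbabilityMeasure ℝ) :
    ProbabilityMeasure (ProbabilityMeasure ℝ) :=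
  ⟨Measure.dirac p, inferInstance⟩

open MeasurableSpace

lemma ProbabilityMeasure.measurableSet_singleton_of_isPiSystem {α : Type*} [m : MeasurableSpace α]
    {C : Set (Set α)} (hC : C.Countable) (hgen : m = generateFrom C) (hpi : IsPiSystem C)
    (μ : ProbabilityMeasure α) : MeasurableSet ({μ} : Set (ProbabilityMeasure α)) := by
  have hset : ({μ} : Set (ProbabilityMeasure α)) =
      ⋂ s ∈ C, {ν : ProbabilityMeasure α | (ν : Measure α) s = (μ : Measure α) s} := by
    ext ν
    simp only [Set.mem_singleton_iff, Set.mem_iInter, Set.mem_ofPred_eq]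
    refine ⟨fun h _ _ => h ▸ rfl, fun h => ProbabilityMeasure.toMeasure_injective ?_⟩
    exact ext_of_generate_finite C hgen hpi h (by simp)
  rw [hset]
  refine .biInter hC fun s hs => ?_
  have hs' : MeasurableSet s := hgen ▸ measurableSet_generateFrom hs
  exact ((Measure.measurable_coe hs').comp measurable_subtype_coe) (measurableSet_singleton _)

-- Needed for `integral_dirac`: `p ↦ ∫ y, L2 Qhat y ∂p` need not be measurable.
instance : MeasurableSingletonClass (ProbabilityMeasure ℝ) :=
  ⟨ProbabilityMeasure.measurableSet_singleton_of_isPiSystem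
    (Set.countable_iUnion fun _ => Set.countable_singleton _)
    Real.borel_eq_generateFrom_Iic_rat Real.isPiSystem_Iic_rat⟩

lemma coe_mix {α : Type*} [MeasurableSpace α] {l : ℝ} (h0 : 0 ≤ l) (h1 : l ≤ 1)
    (Q Q' : ProbabilityMeasure α) :
    (mix l Q Q' : Measure α) =
      ENNReal.ofReal l • (Q : Measure α) + ENNReal.ofReal (1 - l) • (Q' : Measure α) := by
  have hmin : ENNReal.ofReal l ⊓ 1 = ENNReal.ofReal l :=
    inf_eq_left.2 (ENNReal.ofReal_le_one.2 h1)
  change (ENNReal.ofReal l ⊓ 1) • (Q : Measure α) + (1 - (ENNReal.ofReal l ⊓ 1)) • _ = _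
  rw [hmin, ← ENNReal.ofReal_one, ← ENNReal.ofReal_sub _ h0]

lemma integral_mix {α E : Type*} [MeasurableSpace α] [NormedAddCommGroup E] [NormedSpace ℝ E]
    {l : ℝ} (h0 : 0 ≤ l) (h1 : l ≤ 1) {Q Q' : ProbabilityMeasure α} {f : α → E}
    (hf : Integrable f Q) (hf' : Integrable f Q') :
    ∫ x, f x ∂(mix l Q Q' : Measure α) = l • ∫ x, f x ∂Q + (1 - l) • ∫ x, f x ∂Q' := by
  rw [coe_mix h0 h1, integral_add_measure (hf.smul_measure ENNReal.ofReal_ne_top)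
      (hf'.smul_measure ENNReal.ofReal_ne_top), integral_smul_measure, integral_smul_measure,
    ENNReal.toReal_ofReal h0, ENNReal.toReal_ofReal (sub_nonneg.2 h1)]

lemma S2_mix_dirac2 (L2 : ProbabilityMeasure (ProbabilityMeasure ℝ) → ℝ → ℝ)
    (Qhat : ProbabilityMeasure (ProbabilityMeasure ℝ)) (p q : ProbabilityMeasure ℝ) {l : ℝ}
    (h0 : 0 ≤ l) (h1 : l ≤ 1) :
    S2 L2 Qhat (mix l (dirac2 p) (dirac2 q)) =
      l * ∫ y, L2 Qhat y ∂(p : Measure ℝ) + (1 - l) * ∫ y, L2 Qhat y ∂(q : Measure ℝ) := by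
  rw [S2, integral_mix h0 h1 (integrable_dirac enorm_lt_top) (integrable_dirac enorm_lt_top)]
  simp only [dirac2, ProbabilityMeasure.coe_mk, integral_dirac, smul_eq_mul]

lemma mul_lt_one_sub_mul_of_lt_inv_one_add_div {a b l : ℝ} (ha : 0 < a) (hb : 0 ≤ b)
    (hl : l < (1 + b / a)⁻¹) : l * b < (1 - l) * a := by
  rw [one_add_div ha.ne', inv_div, lt_div_iff₀ (by linarith)] at hl
  linarith

lemma lt_one_of_lt_inv_one_add_div {a b l : ℝ} (ha : 0 < a) (hb : 0 ≤ b)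
    (hl : l < (1 + b / a)⁻¹) : l < 1 :=
  hl.trans_le (inv_le_one_of_one_le₀ (le_add_of_nonneg_right (div_nonneg hb ha.le)))

theorem not_proper_of_regression_mixture_general
    (L2 : ProbabilityMeasure (ProbabilityMeasure ℝ) → ℝ → ℝ)
    (pl pr : ProbabilityMeasure ℝ) (lam : ℝ)
    (Q Qt : ProbabilityMeasure (ProbabilityMeasure ℝ))
    (hQ : Q = mix lam (dirac2 pr) (dirac2 pl))
    (hIntl : ∀ Qhat : ProbabilityMeasure (ProbabilityMeasure ℝ),
      Integrable (fun y => L2 Qhat y) (pl : Measure ℝ))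
    (hIntr : ∀ Qhat : ProbabilityMeasure (ProbabilityMeasure ℝ),
      Integrable (fun y => L2 Qhat y) (pr : Measure ℝ))
    (hl : 0 < ∫ y, (L2 Q y - L2 Qt y) ∂(pl : Measure ℝ))
    (hr : 0 < ∫ y, (L2 Qt y - L2 Q y) ∂(pr : Measure ℝ))
    (hlam0 : 0 < lam)
    (hlam1 : lam < (1 + (∫ y, (L2 Qt y - L2 Q y) ∂(pr : Measure ℝ)) /
                        (∫ y, (L2 Q y - L2 Qt y) ∂(pl : Measure ℝ)))⁻¹) :
    S2 L2 Qt Q < S2 L2 Q Q ∧ ¬ Proper L2 := by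
  have hsmall := mul_lt_one_sub_mul_of_lt_inv_one_add_div hl hr.le hlam1
  have hlt1 := lt_one_of_lt_inv_one_add_div hl hr.le hlam1
  rw [integral_sub (hIntl Q) (hIntl Qt), integral_sub (hIntr Qt) (hIntr Q)] at hsmall
  have hlt : S2 L2 Qt Q < S2 L2 Q Q := by
    subst hQ
    rw [S2_mix_dirac2 _ _ _ _ hlam0.le hlt1.le, S2_mix_dirac2 _ _ _ _ hlam0.le hlt1.le]
    linarith
  exact ⟨hlt, fun hproper => (hproper Qt Q).not_gt hlt⟩

/-- regression: for $\tilde Q = \delta_{p_l}$ and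
$Q = (1-\lambda^*)\delta_{p_l} + \lambda^*\delta_{p_r}$ with the stated sign conditions
and $\lambda^*$ small enough, $S_2(\tilde Q, Q) < S_2(Q, Q)$, so the induced scoring
rule is not proper. -/
theorem not_proper_of_regression_mixture
    (L2 : ProbabilityMeasure (ProbabilityMeasure ℝ) → ℝ → ℝ)
    (pl pr : ProbabilityMeasure ℝ) (lam : ℝ)
    (Q Qt : ProbabilityMeasure (ProbabilityMeasure ℝ))
    (hQt : Qt = dirac2 pl)
    (hQ : Q = mix lam (dirac2 pr) (dirac2 pl))
    (hIntl : ∀ Qhat : ProbabilityMeasure (ProbabilityMeasure ℝ),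
      Integrable (fun y => L2 Qhat y) (pl : Measure ℝ))
    (hIntr : ∀ Qhat : ProbabilityMeasure (ProbabilityMeasure ℝ),
      Integrable (fun y => L2 Qhat y) (pr : Measure ℝ))
    (hl : 0 < ∫ y, (L2 Q y - L2 Qt y) ∂(pl : Measure ℝ))
    (hr : 0 < ∫ y, (L2 Qt y - L2 Q y) ∂(pr : Measure ℝ))
    (hlam0 : 0 < lam)
    (hlam1 : lam < (1 + (∫ y, (L2 Qt y - L2 Q y) ∂(pr : Measure ℝ)) /
                        (∫ y, (L2 Q y - L2 Qt y) ∂(pl : Measure ℝ)))⁻¹) :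
    S2 L2 Qt Q < S2 L2 Q Q ∧ ¬ Proper L2 :=
  not_proper_of_regression_mixture_general L2 pl pr lam Q Qt hQ hIntl hIntr hl hr hlam0 hlam1
end
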